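/- arXiv:2306.05818 — 3 statements merged into one kernel-verified Lean document; each statement's English description precedes it below -/
import Mathlib

section
/- Let f : ℝ → ℝ be continuous on [0,1] and not affine linear on [0,1]. Then there exist rationals c, d with 0 ≤ c < d ≤ 1 such that f((c+d)/2) ≠ (f(c)+f(d))/2. -/
/-!
If `f` satisfied the midpoint equation at every pair of rationals in `[0, 1]`, then `f` and the
chord `x ↦ (f 1 - f 0) x + f 0` would both satisfy it at consecutive dyadic points `m / 2 ^ n`,
`(m + 1) / 2 ^ n`; since they agree at `0` and `1`, induction on `n` makes them agree at every
dyadic point of `[0, 1]`. These points are dense and both functions are continuous, so `f` would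
be affine on `[0, 1]`.
-/

open Set

def dyadicUnit : Set ℝ := {x | ∃ n k : ℕ, k ≤ 2 ^ n ∧ x = k / 2 ^ n}

def MidpointDyadic (f : ℝ → ℝ) : Prop :=
  ∀ n m : ℕ, m < 2 ^ n →
    f ((2 * m + 1 : ℕ) / 2 ^ (n + 1)) = (f (m / 2 ^ n) + f ((m + 1 : ℕ) / 2 ^ n)) / 2

lemma midpointDyadic_affine (α β : ℝ) : MidpointDyadic (fun x => α * x + β) := by
  intro n m _
  push_cast
  ring

lemma midpointDyadic_of_rat {f : ℝ → ℝ}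
    (hf : ∀ c d : ℚ, (0:ℝ) ≤ c → (c:ℝ) < d → (d:ℝ) ≤ 1 → f ((c + d) / 2) = (f c + f d) / 2) :
    MidpointDyadic f := by
  intro n m hm
  have hpos : (0:ℝ) < 2 ^ n := by positivity
  have hm' : (m:ℝ) + 1 ≤ 2 ^ n := by exact_mod_cast hm
  have := hf (m / 2 ^ n) ((m + 1) / 2 ^ n) (by push_cast; positivity)
    (by push_cast; gcongr; linarith) (by push_cast; rwa [div_le_one hpos])
  push_cast at this ⊢
  convert this using 2
  ring

lemma MidpointDyadic.eqOn_dyadicUnit {f g : ℝ → ℝ} (hf : MidpointDyadic f) (hg : MidpointDyadic g)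
    (h0 : f 0 = g 0) (h1 : f 1 = g 1) : EqOn f g dyadicUnit := by
  rintro _ ⟨n, k, hk, rfl⟩
  induction n generalizing k with
  | zero =>
    interval_cases k <;> simpa
  | succ n ih =>
    obtain ⟨m, rfl | rfl⟩ := Nat.even_or_odd' k
    · have hscale : ((2 * m : ℕ) : ℝ) / 2 ^ (n + 1) = m / 2 ^ n := by push_cast; ring
      rw [hscale]
      exact ih m (by omega)
    · have hm : m < 2 ^ n := by rw [pow_succ] at hk; omega
      rw [hf n m hm, hg n m hm, ih m hm.le, ih (m + 1) hm]

lemma dyadicUnit_subset_Icc : dyadicUnit ⊆ Icc (0:ℝ) 1 := by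
  rintro _ ⟨n, k, hk, rfl⟩
  have hpos : (0:ℝ) < 2 ^ n := by positivity
  exact ⟨by positivity, (div_le_one hpos).2 (by exact_mod_cast hk)⟩

lemma Icc_subset_closure_dyadicUnit : Icc (0:ℝ) 1 ⊆ closure dyadicUnit := by
  rintro x ⟨hx0, hx1⟩
  rw [Metric.mem_closure_iff]
  intro ε hε
  obtain ⟨n, hn⟩ := exists_pow_lt_of_lt_one hε (by norm_num : (1/2:ℝ) < 1)
  have hpos : (0:ℝ) < 2 ^ n := by positivity
  set k := ⌊x * 2 ^ n⌋₊
  have hk_le : (k:ℝ) ≤ x * 2 ^ n := Nat.floor_le (by positivity)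
  have hk_gt : x * 2 ^ n < k + 1 := Nat.lt_floor_add_one _
  refine ⟨k / 2 ^ n, ⟨n, k, ?_, rfl⟩, ?_⟩
  · exact_mod_cast hk_le.trans (mul_le_of_le_one_left hpos.le hx1)
  · rw [Real.dist_eq, abs_of_nonneg (by rw [sub_nonneg, div_le_iff₀ hpos]; exact hk_le)]
    calc x - k / 2 ^ n < 1 / 2 ^ n := by
          rw [sub_lt_iff_lt_add, ← add_div, lt_div_iff₀ hpos]; linarith
      _ = (1 / 2) ^ n := by rw [div_pow, one_pow]
      _ < ε := hn

theorem stmt_3 (f : ℝ → ℝ)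
    (hcont : ContinuousOn f (Set.Icc (0:ℝ) 1))
    (hnl : ¬ ∃ α β : ℝ, ∀ x ∈ Set.Icc (0:ℝ) 1, f x = α * x + β) :
    ∃ c d : ℚ, (0:ℝ) ≤ (c:ℝ) ∧ (c:ℝ) < d ∧ (d:ℝ) ≤ 1 ∧
      f (((c:ℝ) + d) / 2) ≠ (f c + f d) / 2 := by
  by_contra! hmid
  refine hnl ⟨f 1 - f 0, f 0, fun x hx => ?_⟩
  have hdyadic : EqOn f (fun x => (f 1 - f 0) * x + f 0) dyadicUnit :=
    (midpointDyadic_of_rat hmid).eqOn_dyadicUnit (midpointDyadic_affine _ _) (by simp) (by simp)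
  exact hdyadic.of_subset_closure hcont (by fun_prop) dyadicUnit_subset_Icc
    Icc_subset_closure_dyadicUnit hx
end

section
/- For all real a, b, c, d ≥ 0 with a·b = 0 and c·d = 0, there exists ε ≥ 0 such that e := a·c + b·d − ε ≥ 0 and f := a·d + b·c − ε ≥ 0 satisfy e·f = 0 and e − f = (a − b)·(c − d). -/
theorem mul_add_mul_mul_mul_add_mul_eq_zero {R : Type*} [CommSemiring R] {a b c d : R}
    (hab : a * b = 0) (hcd : c * d = 0) : (a * c + b * d) * (a * d + b * c) = 0 :=
  calc (a * c + b * d) * (a * d + b * c) = a * b * (c ^ 2 + d ^ 2) + c * d * (a ^ 2 + b ^ 2) := by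
        ring
    _ = 0 := by rw [hab, hcd, zero_mul, zero_mul, add_zero]

theorem stmt_14 (a b c d : ℝ) (ha : 0 ≤ a) (hb : 0 ≤ b) (hc : 0 ≤ c) (hd : 0 ≤ d)
    (hab : a * b = 0) (hcd : c * d = 0) :
    ∃ ε : ℝ, 0 ≤ ε ∧
      0 ≤ a * c + b * d - ε ∧ 0 ≤ a * d + b * c - ε ∧
      (a * c + b * d - ε) * (a * d + b * c - ε) = 0 ∧
      (a * c + b * d - ε) - (a * d + b * c - ε) = (a - b) * (c - d) := by
  refine ⟨0, le_rfl, ?_⟩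
  simp only [sub_zero]
  exact ⟨by positivity, by positivity, mul_add_mul_mul_mul_add_mul_eq_zero hab hcd, by ring⟩
end

section
/- Let p be a monic real polynomial of degree n ≥ 2. Then the linear span over ℝ of the set {p(x+k) : k ∈ ℕ} ∪ {1, x} inside ℝ[x] contains x²; in fact it equals the span of {1, x, x², ..., xⁿ}. -/
/-!
The shifts `p(x + k)` span a subspace `W ⊆ ℝ[x]_{≤ n}` that is stable under `q ↦ q(x + 1)`, hence
under the difference operator `Δq = q(x + 1) - q`. In characteristic zero `Δ` lowers the degree
of a nonconstant polynomial by exactly one (the new leading coefficient is `deg q · lc q`), so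
`Δ^[n - i] p ∈ W` has degree exactly `i` for every `i ≤ n`. These polynomials form a triangular
basis of `ℝ[x]_{≤ n}`, so `W` is all of it; in particular `x² ∈ W` as soon as `n ≥ 2`.
-/

open Polynomial

namespace Polynomial

theorem span_range_X_pow_fin_eq_degreeLE {R : Type*} [Semiring R] (n : ℕ) :
    Submodule.span R (Set.range fun i : Fin (n + 1) ↦ (X : R[X]) ^ (i : ℕ)) = degreeLE R n := by
  classical
  rw [degreeLE_eq_span_X_pow]
  congr 1
  ext
  simp [Fin.exists_iff]

section CommRing

variable {R : Type*} [CommRing R] (r : R)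

theorem natDegree_taylor_sub_self_le (f : R[X]) :
    (taylor r f - f).natDegree ≤ f.natDegree - 1 := by
  rw [natDegree_le_iff_coeff_eq_zero]
  intro i hi
  rcases (show f.natDegree ≤ i by omega).eq_or_lt with rfl | hlt
  · rw [coeff_sub, coeff_taylor_natDegree, coeff_natDegree, sub_self]
  · rw [coeff_sub, coeff_eq_zero_of_natDegree_lt hlt,
      coeff_eq_zero_of_natDegree_lt (by rwa [natDegree_taylor]), sub_self]

theorem hasseDeriv_eq_of_natDegree_eq_succ {d : ℕ} {f : R[X]} (hf : f.natDegree = d + 1) :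
    hasseDeriv d f = C (f.coeff d) + C ((d + 1) * f.leadingCoeff) * X := by
  ext (_ | _ | i)
  · simp [hasseDeriv_coeff]
  · simp [hasseDeriv_coeff, leadingCoeff, hf, add_comm 1 d]
  · rw [hasseDeriv_coeff, coeff_eq_zero_of_natDegree_lt (by omega)]
    rw [coeff_add, coeff_C_mul_X, coeff_C]
    simp

theorem coeff_taylor_sub_self_of_natDegree_eq_succ {d : ℕ} {f : R[X]}
    (hf : f.natDegree = d + 1) :
    (taylor r f - f).coeff d = (d + 1) * f.leadingCoeff * r := by
  rw [coeff_sub, taylor_coeff, hasseDeriv_eq_of_natDegree_eq_succ hf]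
  simp

end CommRing

section CharZero

variable {R : Type*} [CommRing R] [NoZeroDivisors R] [CharZero R] {r : R}

theorem degree_taylor_sub_self (hr : r ≠ 0) {d : ℕ} {f : R[X]} (hf : f.natDegree = d + 1) :
    (taylor r f - f).degree = d := by
  have hcoeff : (taylor r f - f).coeff d ≠ 0 := by
    rw [coeff_taylor_sub_self_of_natDegree_eq_succ r hf]
    have hf0 : f ≠ 0 := by rintro rfl; simp at hf
    exact mul_ne_zero
      (mul_ne_zero (by exact_mod_cast d.succ_ne_zero) (leadingCoeff_ne_zero.2 hf0)) hr
  refine degree_eq_of_le_of_coeff_ne_zero (degree_le_of_natDegree_le ?_) hcoeff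
  have := natDegree_taylor_sub_self_le r f
  omega

theorem degree_iterate_taylor_sub_self (hr : r ≠ 0) {n : ℕ} {f : R[X]} (hf : f.degree = n)
    {j : ℕ} (hj : j ≤ n) : ((fun g ↦ taylor r g - g)^[j] f).degree = ↑(n - j) := by
  induction j with
  | zero => simpa using hf
  | succ j ih =>
    rw [Function.iterate_succ_apply']
    refine degree_taylor_sub_self hr ?_
    rw [natDegree_eq_of_degree_eq_some (ih (by omega))]
    omega

end CharZero

theorem span_range_taylor_natCast_eq_degreeLE {K : Type*} [Field K] [CharZero K] {n : ℕ}
    {f : K[X]} (hf : f.degree = n) :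
    Submodule.span K (Set.range fun k : ℕ ↦ taylor (k : K) f) = degreeLE K n := by
  set W := Submodule.span K (Set.range fun k : ℕ ↦ taylor (k : K) f)
  have hW : ∀ g ∈ W, taylor 1 g - g ∈ W := by
    intro g hg
    refine W.sub_mem ?_ hg
    induction hg using Submodule.span_induction with
    | mem _ hg =>
      obtain ⟨k, rfl⟩ := hg
      exact Submodule.subset_span ⟨k + 1, by simp [taylor_taylor, add_comm]⟩
    | zero => simp
    | add _ _ _ _ hg hh => simpa using W.add_mem hg hh
    | smul a _ _ hg => simpa using W.smul_mem a hg
  have hiterate (j : ℕ) : (fun g ↦ taylor 1 g - g)^[j] f ∈ W := by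
    induction j with
    | zero => exact Submodule.subset_span ⟨0, by simp⟩
    | succ j ih => rw [Function.iterate_succ_apply']; exact hW _ ih
  -- `Sequence` needs a polynomial of every degree; above `n` we pad with `X ^ i`.
  let S : Sequence K :=
    { elems' := fun i ↦ if i ≤ n then (fun g ↦ taylor 1 g - g)^[n - i] f else X ^ i
      degree_eq' := fun i ↦ by
        split_ifs with hi
        · rw [degree_iterate_taylor_sub_self one_ne_zero hf (by omega), Nat.sub_sub_self hi]
        · exact degree_X_pow i }
  apply le_antisymm
  · rw [Submodule.span_le]
    rintro _ ⟨k, rfl⟩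
    rw [SetLike.mem_coe, mem_degreeLE, degree_taylor, hf]
  · rw [← S.span_degreeLE fun i _ ↦ (leadingCoeff_ne_zero.2 (S.ne_zero i)).isUnit,
      Submodule.span_le]
    rintro _ ⟨i, hi, rfl⟩
    have hi : i ≤ n := hi
    simpa [S, hi] using hiterate (n - i)

end Polynomial

theorem stmt_19_general (n : ℕ) (hn : 2 ≤ n) (p : Polynomial ℝ)
    (hdeg : p.natDegree = n) :
    X ^ 2 ∈ Submodule.span ℝ
        (({1, X} : Set (Polynomial ℝ)) ∪
          Set.range (fun k : ℕ => p.comp (X + C (k : ℝ)))) ∧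
      Submodule.span ℝ
          (({1, X} : Set (Polynomial ℝ)) ∪
            Set.range (fun k : ℕ => p.comp (X + C (k : ℝ)))) =
        Submodule.span ℝ (Set.range (fun i : Fin (n + 1) => X ^ (i : ℕ))) := by
  have hp : p.degree = n := (degree_eq_iff_natDegree_eq_of_pos (by omega)).2 hdeg
  have hshifts : Submodule.span ℝ (Set.range fun k : ℕ ↦ p.comp (X + C (k : ℝ))) =
      degreeLE ℝ n :=
    span_range_taylor_natCast_eq_degreeLE hp
  have hlow : ({1, X} : Set ℝ[X]) ⊆ degreeLE ℝ n := by
    rintro _ (rfl | rfl) <;> rw [SetLike.mem_coe, mem_degreeLE]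
    · exact degree_one_le.trans (by exact_mod_cast Nat.zero_le n)
    · exact degree_X_le.trans (by exact_mod_cast (by omega : 1 ≤ n))
  rw [Submodule.span_union, hshifts, sup_eq_right.2 (Submodule.span_le.2 hlow),
    span_range_X_pow_fin_eq_degreeLE]
  refine ⟨?_, rfl⟩
  rw [mem_degreeLE, degree_X_pow]
  exact_mod_cast hn

theorem stmt_19 (n : ℕ) (hn : 2 ≤ n) (p : Polynomial ℝ)
    (hmonic : p.Monic) (hdeg : p.natDegree = n) :
    X ^ 2 ∈ Submodule.span ℝ
        (({1, X} : Set (Polynomial ℝ)) ∪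
          Set.range (fun k : ℕ => p.comp (X + C (k : ℝ)))) ∧
      Submodule.span ℝ
          (({1, X} : Set (Polynomial ℝ)) ∪
            Set.range (fun k : ℕ => p.comp (X + C (k : ℝ)))) =
        Submodule.span ℝ (Set.range (fun i : Fin (n + 1) => X ^ (i : ℕ))) :=
  stmt_19_general n hn p hdeg
end
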